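/- arXiv:1203.0138 — 8 statements merged into one kernel-verified Lean document; each statement's English description precedes it below -/
import Mathlib

section
/- Let G be a finite group generated by elements g of order m and h of order n with (gh)^2 = 1 (and gh ≠ 1). If t is an odd prime dividing |G| such that the t-part of |G| strictly exceeds the t-part of lcm(m,n), then t divides the Euler characteristic χ = |G|·(1/m - 1/2 + 1/n). -/
theorem stmt_0 {G : Type*} [Group G] [Fintype G] (g h : G) (m n : ℕ)
    (hm : orderOf g = m) (hn : orderOf h = n)
    (hgen : Subgroup.closure ({g, h} : Set G) = ⊤)
    (hsq : (g * h) ^ 2 = 1) (hne : g * h ≠ 1)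
    (χ : ℤ) (hχ : (χ : ℚ) = (Fintype.card G : ℚ) * (1 / m - 1 / 2 + 1 / n))
    (t : ℕ) (ht : t.Prime) (htodd : Odd t) (htdvd : t ∣ Fintype.card G)
    (hpart : (Nat.lcm m n).factorization t < (Fintype.card G).factorization t) :
    (t : ℤ) ∣ χ := by
  set N := Fintype.card G with hNdef
  have hm0 : 0 < m := hm ▸ orderOf_pos g
  have hn0 : 0 < n := hn ▸ orderOf_pos h
  have hN0 : 0 < N := Fintype.card_pos
  have hmdvd : m ∣ N := hm ▸ orderOf_dvd_card
  have hndvd : n ∣ N := hn ▸ orderOf_dvd_card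
  have h2 : orderOf (g * h) = 2 := by
    have hd : orderOf (g * h) ∣ 2 := orderOf_dvd_of_pow_eq_one hsq
    rcases (Nat.prime_two.eq_one_or_self_of_dvd _ hd) with h1 | h2
    · exact absurd (orderOf_eq_one_iff.mp h1) hne
    · exact h2
  have h2dvd : 2 ∣ N := h2 ▸ orderOf_dvd_card
  -- χ = N/m + N/n - N/2 as integers
  have key : χ = ((N / m : ℕ) : ℤ) + ((N / n : ℕ) : ℤ) - ((N / 2 : ℕ) : ℤ) := by
    have hq : (χ : ℚ) = ((N / m : ℕ) : ℚ) + ((N / n : ℕ) : ℚ) - ((N / 2 : ℕ) : ℚ) := by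
      rw [Nat.cast_div hmdvd (by exact_mod_cast hm0.ne'),
          Nat.cast_div hndvd (by norm_num; exact_mod_cast hn0.ne'),
          Nat.cast_div h2dvd (by norm_num), hχ]
      field_simp
      ring
    exact_mod_cast hq
  have hmle : m.factorization t ≤ (Nat.lcm m n).factorization t :=
    (Nat.factorization_le_iff_dvd hm0.ne' (Nat.lcm_ne_zero hm0.ne' hn0.ne')).2
      (Nat.dvd_lcm_left m n) t
  have hnle : n.factorization t ≤ (Nat.lcm m n).factorization t :=
    (Nat.factorization_le_iff_dvd hn0.ne' (Nat.lcm_ne_zero hm0.ne' hn0.ne')).2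
      (Nat.dvd_lcm_right m n) t
  have hdvdA : t ∣ N / m := by
    have hA0 : N / m ≠ 0 := Nat.div_ne_zero_iff_of_dvd hmdvd |>.2 ⟨hN0.ne', hm0.ne'⟩
    rw [ht.dvd_iff_one_le_factorization hA0, Nat.factorization_div hmdvd]
    simp only [Finsupp.tsub_apply]
    omega
  have hdvdB : t ∣ N / n := by
    have hB0 : N / n ≠ 0 := Nat.div_ne_zero_iff_of_dvd hndvd |>.2 ⟨hN0.ne', hn0.ne'⟩
    rw [ht.dvd_iff_one_le_factorization hB0, Nat.factorization_div hndvd]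
    simp only [Finsupp.tsub_apply]
    omega
  have hdvdC : t ∣ N / 2 := by
    have hC0 : N / 2 ≠ 0 := Nat.div_ne_zero_iff_of_dvd h2dvd |>.2 ⟨hN0.ne', two_ne_zero⟩
    have h2f : (2 : ℕ).factorization t = 0 := by
      apply Nat.factorization_eq_zero_of_not_dvd
      intro hd
      rcases (Nat.prime_two.eq_one_or_self_of_dvd t hd) with h1 | h2'
      · exact ht.one_lt.ne' h1
      · rw [h2'] at htodd; exact (Nat.not_odd_iff_even.mpr even_two) htodd
    rw [ht.dvd_iff_one_le_factorization hC0, Nat.factorization_div h2dvd]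
    simp only [Finsupp.tsub_apply]
    omega
  rw [key]
  exact dvd_sub (dvd_add (Int.natCast_dvd_natCast.2 hdvdA) (Int.natCast_dvd_natCast.2 hdvdB))
    (Int.natCast_dvd_natCast.2 hdvdC)
end

section
/- Let G be a finite group with elements g, h of orders m, n, and let N be a normal subgroup of G. Write m_N, n_N for the orders of gN, hN in G/N. If an odd prime t satisfies |G/N|_t > lcm(m_N, n_N)_t (where subscript t denotes the t-part), then |G|_t > lcm(m,n)_t. -/
theorem stmt_4 {G : Type*} [Group G] [Fintype G] (g h : G) (m n : ℕ)
    (hm : orderOf g = m) (hn : orderOf h = n)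
    (N : Subgroup G) [N.Normal]
    (mN nN : ℕ) (hmN : orderOf ((g : G ⧸ N)) = mN) (hnN : orderOf ((h : G ⧸ N)) = nN)
    (t : ℕ) (ht : t.Prime) (htodd : Odd t)
    (hq : (Nat.lcm mN nN).factorization t < (Nat.card (G ⧸ N)).factorization t) :
    (Nat.lcm m n).factorization t < (Fintype.card G).factorization t := by
  have hNpos : 0 < Nat.card N := Nat.card_pos
  have hdvd : ∀ x : G, orderOf x ∣ orderOf ((x : G ⧸ N)) * Nat.card N := by
    intro x
    have hx : x ^ orderOf ((x : G ⧸ N)) ∈ N := by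
      rw [← QuotientGroup.eq_one_iff]
      rw [QuotientGroup.mk_pow]
      exact pow_orderOf_eq_one _
    have h1 : orderOf (x ^ orderOf ((x : G ⧸ N))) ∣ Nat.card N :=
      Subgroup.orderOf_dvd_natCard N hx
    calc orderOf x ∣ orderOf ((x : G ⧸ N)) * orderOf (x ^ orderOf ((x : G ⧸ N))) := by
          apply orderOf_dvd_of_pow_eq_one
          rw [pow_mul]
          exact pow_orderOf_eq_one _
      _ ∣ orderOf ((x : G ⧸ N)) * Nat.card N := mul_dvd_mul_left _ h1
  have hmpos : 0 < m := hm ▸ orderOf_pos g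
  have hnpos : 0 < n := hn ▸ orderOf_pos h
  have hmNpos : 0 < mN := hmN ▸ orderOf_pos _
  have hnNpos : 0 < nN := hnN ▸ orderOf_pos _
  have hmdvd : m ∣ mN * Nat.card N := hm ▸ hmN ▸ hdvd g
  have hndvd : n ∣ nN * Nat.card N := hn ▸ hnN ▸ hdvd h
  have hfm : m.factorization t ≤ mN.factorization t + (Nat.card N).factorization t := by
    have := (Nat.factorization_le_iff_dvd hmpos.ne' (by positivity)).2 hmdvd t
    rwa [Nat.factorization_mul hmNpos.ne' hNpos.ne', Finsupp.add_apply] at this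
  have hfn : n.factorization t ≤ nN.factorization t + (Nat.card N).factorization t := by
    have := (Nat.factorization_le_iff_dvd hnpos.ne' (by positivity)).2 hndvd t
    rwa [Nat.factorization_mul hnNpos.ne' hNpos.ne', Finsupp.add_apply] at this
  have hGcard : Fintype.card G = Nat.card (G ⧸ N) * Nat.card N := by
    rw [← Nat.card_eq_fintype_card, Subgroup.card_eq_card_quotient_mul_card_subgroup N]
  rw [hGcard, Nat.factorization_mul (Nat.card_pos (α := G ⧸ N)).ne' hNpos.ne',
    Finsupp.add_apply, Nat.factorization_lcm hmpos.ne' hnpos.ne', Finsupp.sup_apply]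
  rw [Nat.factorization_lcm hmNpos.ne' hnNpos.ne', Finsupp.sup_apply] at hq
  have h1 : mN.factorization t < (Nat.card (G ⧸ N)).factorization t :=
    le_sup_left.trans_lt hq
  have h2 : nN.factorization t < (Nat.card (G ⧸ N)).factorization t :=
    le_sup_right.trans_lt hq
  exact sup_lt_iff.2 ⟨by omega, by omega⟩
end

section
/- Suppose q = p^a is a prime power with q = 2^b + 1 or q = 2^b - 1 for some positive integer b, and q is not prime (i.e., a ≥ 2). Then q = 9. -/
-- An odd integer dividing a power of two is ±1.
lemma aux_four_dvd {i : ℕ} (h : 2 ≤ i) : (4:ℕ) ∣ 2 ^ i := by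
  have h1 : (2:ℕ) ^ i = 2 ^ 2 * 2 ^ (i - 2) := by rw [← pow_add]; congr 1; omega
  norm_num at h1
  exact ⟨2 ^ (i - 2), h1⟩

lemma aux_odd_dvd_two_pow {T : ℤ} {b : ℕ} (hd : T ∣ 2 ^ b) (ho : ¬ (2 ∣ T)) :
    T = 1 ∨ T = -1 := by
  have h1 : T.natAbs ∣ 2 ^ b := by
    have h2 := Int.natAbs_dvd_natAbs.mpr hd
    rwa [show ((2:ℤ) ^ b).natAbs = 2 ^ b by rw [Int.natAbs_pow]; rfl] at h2
  have hmod : T % 2 = 1 := by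
    rcases Int.emod_two_eq T with h' | h'
    · exact absurd (Int.dvd_of_emod_eq_zero h') ho
    · exact h'
  have hodd : Odd T.natAbs := Int.natAbs_odd.mpr (Int.odd_iff.mpr hmod)
  have hnd : ¬ (2 ∣ T.natAbs) := by
    rw [Nat.odd_iff] at hodd; omega
  have hcop : Nat.Coprime T.natAbs 2 :=
    ((Nat.prime_two.coprime_iff_not_dvd).mpr hnd).symm
  have : T.natAbs = 1 := Nat.Coprime.eq_one_of_dvd (hcop.pow_right b) h1
  rcases Int.natAbs_eq T with h' | h' <;> rw [this] at h' <;> [left; right] <;> simpa using h'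

lemma aux_nat_odd (n : ℕ) (hn : n % 2 = 1) : ((n : ℕ) : ZMod 2) = 1 := by
  rw [← ZMod.natCast_mod, hn, Nat.cast_one]

lemma aux_cast_odd (n : ℕ) (hn : n % 2 = 1) : ((n : ℤ) : ZMod 2) = 1 := by
  have h' : ((n : ℤ) : ZMod 2) = (n : ZMod 2) := by push_cast; ring
  rw [h', aux_nat_odd n hn]

theorem stmt_6 (p a b q : ℕ) (hp : p.Prime) (hq : q = p ^ a) (ha : 2 ≤ a)
    (hb : 0 < b) (h : q = 2 ^ b + 1 ∨ q = 2 ^ b - 1) : q = 9 := by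
  have hp2 : 2 ≤ p := hp.two_le
  have h2b : (1:ℕ) ≤ 2 ^ b := Nat.one_le_two_pow
  have h2bm : 2 ^ b % 2 = 0 := by
    rw [Nat.pow_mod]; simp [show b ≠ 0 by omega]
  -- p is odd
  rcases hp.eq_two_or_odd with rfl | hpodd
  · -- p = 2 : impossible by parity
    exfalso
    have h2am : 2 ^ a % 2 = 0 := by
      rw [Nat.pow_mod]; simp [show a ≠ 0 by omega]
    subst hq
    rcases h with h | h <;> omega
  rcases Nat.even_or_odd a with he | hodd
  · -- a even: a = 2m, q = x^2 with x = p^m odd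
    obtain ⟨m, hm⟩ := he
    have hm1 : 1 ≤ m := by omega
    set x := p ^ m with hx
    have hxodd : x % 2 = 1 := by
      rw [hx, Nat.pow_mod, hpodd, one_pow]
      omega
    have hx3 : 3 ≤ x := by
      have hp3 : 3 ≤ p := by rcases Nat.lt_or_ge p 3 with h' | h' <;> omega
      calc 3 ≤ p := hp3
        _ = p ^ 1 := (pow_one p).symm
        _ ≤ p ^ m := Nat.pow_le_pow_right (by omega) hm1
    have hq2 : q = x ^ 2 := by
      rw [hq, hx, ← pow_mul, hm]; ring_nf
    rcases h with h | h
    · -- x^2 = 2^b + 1, so (x-1)(x+1) = 2^b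
      have key : (x - 1) * (x + 1) = 2 ^ b := by
        have : x ^ 2 = 2 ^ b + 1 := by omega
        have hx1 : 1 ≤ x := by omega
        nlinarith [Nat.sub_add_cancel hx1]
      have hd1 : (x - 1) ∣ 2 ^ b := ⟨x + 1, key.symm⟩
      have hd2 : (x + 1) ∣ 2 ^ b := ⟨x - 1, by rw [← key]; ring⟩
      obtain ⟨i, hi, hie⟩ := (Nat.dvd_prime_pow Nat.prime_two).mp hd1
      obtain ⟨j, hj, hje⟩ := (Nat.dvd_prime_pow Nat.prime_two).mp hd2
      -- 2^j - 2^i = 2 with 2^i ≥ 2, 2^j ≥ 4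
      have h2i : 2 ≤ 2 ^ i := by omega
      have h2j : 4 ≤ 2 ^ j := by omega
      have hi1 : 1 ≤ i := by
        by_contra h'
        interval_cases i <;> omega
      have hj2 : 2 ≤ j := by
        by_contra h'
        interval_cases j <;> omega
      have hdi : (4:ℕ) ∣ 2 ^ i ∨ 2 ^ i = 2 := by
        rcases Nat.lt_or_ge i 2 with h' | h'
        · right; interval_cases i <;> omega
        · left; exact aux_four_dvd h'
      have hdj : (4:ℕ) ∣ 2 ^ j := aux_four_dvd hj2
      have hx3' : x = 3 := by
        rcases hdi with ⟨k, hk⟩ | h' <;> omega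
      -- p^m = 3, so p = 3 and m = 1
      have hpm : p ^ m = 3 := by rw [← hx, hx3']
      have hp3 : p = 3 := by
        have hdvd : p ∣ 3 := hpm ▸ dvd_pow_self p (by omega)
        have := (Nat.prime_dvd_prime_iff_eq hp Nat.prime_three).mp hdvd
        exact this
      have hm1' : m = 1 := by
        subst hp3
        rcases Nat.lt_or_ge m 2 with h' | h'
        · omega
        · exfalso
          have : 3 ^ 2 ≤ 3 ^ m := Nat.pow_le_pow_right (by omega) h'
          omega
      rw [hq2, hx3']; norm_num
    · -- x^2 + 1 = 2^b : impossible since x^2 ≡ 1 mod 4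
      exfalso
      obtain ⟨k, hk⟩ := Nat.odd_iff.mpr hxodd
      have hsq : x ^ 2 = 4 * (k * k + k) + 1 := by rw [hk]; ring
      have hqx : x ^ 2 + 1 = 2 ^ b := by omega
      have hb2 : 2 ≤ b := by
        by_contra h'
        interval_cases b <;> omega
      have : (4:ℕ) ∣ 2 ^ b := aux_four_dvd hb2
      omega
  · -- a odd (hence a ≥ 3)
    have ha3 : 3 ≤ a := by
      rcases Nat.odd_iff.mp hodd with h'
      omega
    have hpa_gt : p < p ^ a := by
      calc p = p ^ 1 := (pow_one p).symm
        _ < p ^ a := Nat.pow_lt_pow_right (by omega) (by omega)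
    exfalso
    rcases h with h | h
    · -- p^a = 2^b + 1 : S = ∑ p^i is odd dividing 2^b
      have hpa : (p:ℤ) ^ a = 2 ^ b + 1 := by
        have : p ^ a = 2 ^ b + 1 := by omega
        exact_mod_cast this
      set S : ℤ := ∑ i ∈ Finset.range a, (p:ℤ) ^ i with hS
      have hgeom : S * ((p:ℤ) - 1) = (p:ℤ) ^ a - 1 := geom_sum_mul _ a
      have hSd : S ∣ (2:ℤ) ^ b := ⟨(p:ℤ) - 1, by rw [hgeom, hpa]; ring⟩
      have hSodd : ¬ (2 ∣ S) := by
        intro hdvd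
        have hcast : (S : ZMod 2) = 0 := by
          obtain ⟨c, hc⟩ := hdvd
          rw [hc]; push_cast
          rw [show (2 : ZMod 2) = 0 from by decide, zero_mul]
        have : (S : ZMod 2) = (a : ZMod 2) := by
          rw [hS]; push_cast
          have hpz : ((p:ℤ) : ZMod 2) = 1 := aux_cast_odd p hpodd
          calc (∑ i ∈ Finset.range a, ((p:ℤ) : ZMod 2) ^ i)
              = ∑ i ∈ Finset.range a, 1 := by
                apply Finset.sum_congr rfl; intro i _; rw [hpz, one_pow]
            _ = (a : ZMod 2) := by simp
        rw [this] at hcast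
        have ha1 : (a : ZMod 2) = 1 := aux_nat_odd a (Nat.odd_iff.mp hodd)
        rw [ha1] at hcast
        exact one_ne_zero hcast
      rcases aux_odd_dvd_two_pow hSd hSodd with h1 | h1
      · rw [h1, one_mul] at hgeom
        have : (p:ℤ) ^ a = (p:ℤ) := by omega
        have : p ^ a = p := by exact_mod_cast this
        omega
      · rw [h1] at hgeom
        have hp1 : (0:ℤ) < (p:ℤ) - 1 := by
          have : (2:ℤ) ≤ (p:ℤ) := by exact_mod_cast hp2
          omega
        have hpaa : (1:ℤ) < (p:ℤ) ^ a := by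
          have : (p:ℕ) < p ^ a := hpa_gt
          have h2 : (2:ℤ) ≤ (p:ℤ) := by exact_mod_cast hp2
          nlinarith [hpa]
        nlinarith
    · -- p^a + 1 = 2^b : T = alternating sum is odd dividing 2^b
      have hpa : (p:ℤ) ^ a + 1 = 2 ^ b := by
        have : p ^ a + 1 = 2 ^ b := by omega
        exact_mod_cast this
      set T : ℤ := ∑ i ∈ Finset.range a, (p:ℤ) ^ i * (-1:ℤ) ^ (a - 1 - i) with hT
      have hgeom : T * ((p:ℤ) - (-1)) = (p:ℤ) ^ a - (-1) ^ a := geom_sum₂_mul _ _ a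
      have hneg : ((-1:ℤ)) ^ a = -1 := Odd.neg_one_pow hodd
      have hgeom' : T * ((p:ℤ) + 1) = (p:ℤ) ^ a + 1 := by
        rw [hneg] at hgeom; linarith [hgeom]
      have hTd : T ∣ (2:ℤ) ^ b := ⟨(p:ℤ) + 1, by rw [hgeom', hpa]⟩
      have hTodd : ¬ (2 ∣ T) := by
        intro hdvd
        have hcast : (T : ZMod 2) = 0 := by
          obtain ⟨c, hc⟩ := hdvd
          rw [hc]; push_cast
          rw [show (2 : ZMod 2) = 0 from by decide, zero_mul]
        have : (T : ZMod 2) = (a : ZMod 2) := by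
          rw [hT]; push_cast
          have hpz : ((p:ℤ) : ZMod 2) = 1 := aux_cast_odd p hpodd
          calc (∑ i ∈ Finset.range a, ((p:ℤ) : ZMod 2) ^ i * (-1 : ZMod 2) ^ (a - 1 - i))
              = ∑ i ∈ Finset.range a, 1 := by
                apply Finset.sum_congr rfl; intro i _
                rw [hpz, one_pow, one_mul]
                have : (-1 : ZMod 2) = 1 := by decide
                rw [this, one_pow]
            _ = (a : ZMod 2) := by simp
        rw [this] at hcast
        have ha1 : (a : ZMod 2) = 1 := aux_nat_odd a (Nat.odd_iff.mp hodd)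
        rw [ha1] at hcast
        exact one_ne_zero hcast
      rcases aux_odd_dvd_two_pow hTd hTodd with h1 | h1
      · rw [h1, one_mul] at hgeom'
        have : (p:ℤ) ^ a = (p:ℤ) := by omega
        have : p ^ a = p := by exact_mod_cast this
        omega
      · rw [h1] at hgeom'
        have h2 : (2:ℤ) ≤ (p:ℤ) := by exact_mod_cast hp2
        have hpaa : (0:ℤ) < (p:ℤ) ^ a := by positivity
        nlinarith
end

section
/- Let p = 2^a + 1 be a prime with a ≥ 2, and set χ = -(p-1)(p²-5p-2)/4. If χ = ±2^c for some nonnegative integer c, then p = 5. -/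
theorem stmt_8 (a p : ℕ) (ha : 2 ≤ a) (hp : p.Prime) (hpa : p = 2 ^ a + 1)
    (χ : ℤ) (hχ : χ = -(((p : ℤ) - 1) * ((p : ℤ) ^ 2 - 5 * p - 2)) / 4)
    (h : ∃ c : ℕ, χ = 2 ^ c ∨ χ = -(2 ^ c)) : p = 5 := by
  -- split: a = 2 or a ≥ 3
  rcases Nat.lt_or_ge a 3 with ha2 | ha3
  · interval_cases a
    · simp [hpa]
  · obtain ⟨b, rfl⟩ : ∃ b, a = b + 3 := ⟨a - 3, by omega⟩
    exfalso
    obtain ⟨c, hc⟩ := h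
    have hpz : (p : ℤ) = 2 ^ (b + 3) + 1 := by rw [hpa]; push_cast; ring
    set m : ℤ := 2 ^ (2 * b + 5) - 3 * 2 ^ (b + 2) - 3 with hm
    have hx : (1 : ℤ) ≤ 2 ^ b := one_le_pow₀ (by norm_num)
    have hm17 : 17 ≤ m := by
      rw [hm]
      have h1 : (2 : ℤ) ^ (2 * b + 5) = 32 * (2 ^ b) * (2 ^ b) := by ring
      have h2 : (2 : ℤ) ^ (b + 2) = 4 * 2 ^ b := by ring
      rw [h1, h2]
      nlinarith
    have hmodd : Odd m := by
      refine ⟨2 ^ (2 * b + 4) - 3 * 2 ^ (b + 1) - 2, ?_⟩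
      rw [hm]; ring
    have hkey : χ = -(2 ^ (b + 2) * m) := by
      have h4 : ((p : ℤ) - 1) * ((p : ℤ) ^ 2 - 5 * p - 2) = 4 * (2 ^ (b + 2) * m) := by
        rw [hpz, hm]; ring
      rw [hχ, h4, ← mul_neg, Int.mul_ediv_cancel_left _ (by norm_num)]
    have hpow2 : (0 : ℤ) < 2 ^ (b + 2) := by positivity
    rcases hc with hc | hc
    · have hpos : (0 : ℤ) < 2 ^ c := by positivity
      nlinarith [hkey ▸ hc]
    · have h2c : (2 : ℤ) ^ c = 2 ^ (b + 2) * m := by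
        have := hkey ▸ hc
        linarith
      have hdvd : m ∣ (2 : ℤ) ^ c := ⟨2 ^ (b + 2), by linarith [h2c, mul_comm ((2:ℤ) ^ (b+2)) m]⟩
      have hdvdn : m.natAbs ∣ 2 ^ c := by
        have h := Int.natAbs_dvd_natAbs.mpr hdvd
        simpa [Int.natAbs_pow] using h
      have hoddn : Odd m.natAbs := Int.natAbs_odd.mpr hmodd
      have hcop : Nat.Coprime m.natAbs 2 := by
        have : ¬ 2 ∣ m.natAbs := by
          intro hd
          exact (Nat.not_even_iff_odd.mpr hoddn) (even_iff_two_dvd.mpr hd)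
        exact ((Nat.Prime.coprime_iff_not_dvd Nat.prime_two).mpr this).symm
      have : m.natAbs = 1 := Nat.Coprime.eq_one_of_dvd (hcop.pow_right c) hdvdn
      omega
end

section
/- Let p = 2^a - 1 be a prime with a ≥ 3, and set χ = -(p+1)(p²-7p+2)/4. If χ = ±2^c for some nonnegative integer c, then p = 7. -/
theorem stmt_9 (a p : ℕ) (ha : 3 ≤ a) (hp : p.Prime) (hpa : (p : ℤ) = 2 ^ a - 1)
    (χ : ℤ) (hχ : χ = -(((p : ℤ) + 1) * ((p : ℤ) ^ 2 - 7 * p + 2)) / 4)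
    (h : ∃ c : ℕ, χ = 2 ^ c ∨ χ = -(2 ^ c)) : p = 7 := by
  set q : ℤ := (p : ℤ) with hq
  -- q + 1 = 2^a = 4 * 2^(a-2)
  have ha2 : a = 2 + (a - 2) := by omega
  have hpow : (2 : ℤ) ^ a = 4 * 2 ^ (a - 2) := by
    conv_lhs => rw [ha2]
    rw [pow_add]; norm_num
  have hq1 : q + 1 = 4 * 2 ^ (a - 2) := by rw [hpa]; linarith
  -- q ≥ 7
  have hq7 : 7 ≤ q := by
    have : (2:ℤ)^3 ≤ 2 ^ a := pow_le_pow_right₀ (by norm_num) ha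
    rw [hpa]; linarith [this]
  -- q = 4t + 3
  have ha3 : a - 2 = 1 + (a - 3) := by omega
  obtain ⟨t, ht⟩ : ∃ t : ℤ, q = 4 * t + 3 := by
    exact ⟨2 ^ (a - 2) - 1, by linarith⟩
  set d : ℤ := q ^ 2 - 7 * q + 2 with hd
  have hdform : d = 4 * (4 * t ^ 2 - t - 3) + 2 := by rw [hd, ht]; ring
  -- exact division
  have hdiv : (4 : ℤ) ∣ -((q + 1) * d) := by
    rw [hq1]; exact ⟨-(2 ^ (a-2) * d), by ring⟩
  have hχ4 : 4 * χ = -((q + 1) * d) := by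
    rw [hχ]
    exact Int.mul_ediv_cancel' hdiv
  obtain ⟨c, hc⟩ := h
  have key : (4 * 2 ^ (a - 2)) * d = -(2 ^ (c + 2)) ∨ (4 * 2 ^ (a - 2)) * d = 2 ^ (c + 2) := by
    rcases hc with hc | hc
    · left
      have : 4 * χ = 4 * 2 ^ c := by rw [hc]
      rw [hχ4, hq1] at this
      have h2 : (2:ℤ)^(c+2) = 4 * 2 ^ c := by ring
      rw [h2]; linarith
    · right
      have : 4 * χ = -(4 * 2 ^ c) := by rw [hc]; ring
      rw [hχ4, hq1] at this
      have h2 : (2:ℤ)^(c+2) = 4 * 2 ^ c := by ring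
      rw [h2]; linarith
  -- d divides 2^(c+2)
  have hddvd : d ∣ (2 : ℤ) ^ (c + 2) := by
    rcases key with hk | hk
    · exact ⟨-(4 * 2 ^ (a - 2)), by linarith [hk]⟩
    · exact ⟨4 * 2 ^ (a - 2), by linarith [hk]⟩
  have hnat : d.natAbs ∣ 2 ^ (c + 2) := by
    have h1 := Int.natAbs_dvd_natAbs.mpr hddvd
    have h2 : ((2:ℤ) ^ (c + 2)).natAbs = 2 ^ (c + 2) := by
      rw [Int.natAbs_pow]; rfl
    rwa [h2] at h1
  obtain ⟨k, hk, hkeq⟩ := (Nat.dvd_prime_pow Nat.prime_two).mp hnat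
  have hdabs : d = (2 : ℤ) ^ k ∨ d = -((2:ℤ) ^ k) := by
    have h1 : (d.natAbs : ℤ) = 2 ^ k := by exact_mod_cast hkeq
    rcases Int.natAbs_eq d with he | he
    · left; rw [he, h1]
    · right; rw [he, h1]
  -- d = 4s + 2, so k = 1
  have hd2 : d = 2 ∨ d = -2 := by
    match k with
    | 0 => simp at hdabs; omega
    | 1 => simpa using hdabs
    | (n + 2) =>
      exfalso
      have h4 : (2:ℤ) ^ (n + 2) = 4 * 2 ^ n := by ring
      rw [h4] at hdabs
      have hn : (0:ℤ) < 2 ^ n := by positivity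
      omega
  rcases hd2 with h2 | h2
  · have : q * (q - 7) = 0 := by rw [hd] at h2; nlinarith
    have : q = 7 := by
      rcases mul_eq_zero.mp this with h | h
      · omega
      · omega
    rw [hq] at this
    exact_mod_cast this
  · exfalso
    rw [hd] at h2
    nlinarith [sq_nonneg (q - 7)]
end

section
/- Let p = 2^a + 1 be a prime with a ≥ 2, and set χ = -(p-1)(p²-3p-2)/2. If χ = ±2^c for some nonnegative integer c, then p = 5. -/
theorem stmt_10 (a p : ℕ) (ha : 2 ≤ a) (hp : p.Prime) (hpa : p = 2 ^ a + 1)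
    (χ : ℤ) (hχ : χ = -(((p : ℤ) - 1) * ((p : ℤ) ^ 2 - 3 * p - 2)) / 2)
    (h : ∃ c : ℕ, χ = 2 ^ c ∨ χ = -(2 ^ c)) : p = 5 := by
  obtain ⟨b, rfl⟩ : ∃ b, a = b + 2 := ⟨a - 2, by omega⟩
  subst hpa
  set d : ℤ := 2 ^ (2 * b + 2) - 2 ^ b - 1 with hd
  have hχ' : χ = -(2 : ℤ) ^ (b + 3) * d := by
    have hN : -((((((2 : ℕ) ^ (b + 2) + 1 : ℕ)) : ℤ) - 1) *
        ((((2 : ℕ) ^ (b + 2) + 1 : ℕ) : ℤ) ^ 2 - 3 * ((2 : ℕ) ^ (b + 2) + 1 : ℕ) - 2))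
        = 2 * (-(2 : ℤ) ^ (b + 3) * d) := by
      push_cast
      ring
    rw [hχ, hN]
    exact Int.mul_ediv_cancel_left _ (by norm_num)
  rcases Nat.eq_zero_or_pos b with hb | hb
  · subst hb; norm_num
  · exfalso
    have hx : (2 : ℤ) ≤ 2 ^ b := by
      calc (2 : ℤ) = 2 ^ 1 := by norm_num
      _ ≤ 2 ^ b := pow_le_pow_right₀ (by norm_num) hb
    have hsq : (2 : ℤ) ^ (2 * b + 2) = 4 * (2 ^ b) * (2 ^ b) := by ring
    have hd1 : 1 < d := by
      rw [hd, hsq]; nlinarith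
    have hodd : Odd d := by
      have h1 : (2 : ℤ) ∣ 2 ^ (2 * b + 2) := dvd_pow_self 2 (by omega)
      have h2 : (2 : ℤ) ∣ 2 ^ b := dvd_pow_self 2 (by omega)
      rw [hd]
      rcases h1 with ⟨u, hu⟩; rcases h2 with ⟨v, hv⟩
      exact ⟨u - v - 1, by omega⟩
    obtain ⟨c, hc⟩ := h
    have hdvd : d ∣ (2 : ℤ) ^ c := by
      rcases hc with hc | hc
      · refine ⟨-2 ^ (b + 3), ?_⟩
        rw [← hc, hχ']; ring
      · refine ⟨2 ^ (b + 3), ?_⟩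
        have : -χ = 2 ^ c := by omega
        rw [← this, hχ']; ring
    have hnat : d.natAbs ∣ 2 ^ c := by
      have := Int.natAbs_dvd_natAbs.mpr hdvd
      simpa [Int.natAbs_pow] using this
    have hoddn : Odd d.natAbs := Int.natAbs_odd.mpr hodd
    have hcop : Nat.Coprime d.natAbs 2 := Nat.coprime_two_right.mpr hoddn
    have : d.natAbs = 1 := (hcop.pow_right c).eq_one_of_dvd hnat
    omega
end

section
/- Let p = 2^a - 1 be a prime with a ≥ 3, and set χ = -(p+1)(p²-5p+2)/2. If χ = ±2^c for some nonnegative integer c, then p = 7. -/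
theorem stmt_11 (a p : ℕ) (ha : 3 ≤ a) (hp : p.Prime) (hpa : (p : ℤ) = 2 ^ a - 1)
    (χ : ℤ) (hχ : χ = -(((p : ℤ) + 1) * ((p : ℤ) ^ 2 - 5 * p + 2)) / 2)
    (h : ∃ c : ℕ, χ = 2 ^ c ∨ χ = -(2 ^ c)) : p = 7 := by
  by_cases h3 : a = 3
  · have : (p : ℤ) = 7 := by rw [hpa, h3]; norm_num
    exact_mod_cast this
  -- now a ≥ 4
  have ha4 : 4 ≤ a := by omega
  set m : ℤ := (p : ℤ) ^ 2 - 5 * p + 2 with hm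
  have hpow : ((p : ℤ) + 1) = 2 ^ a := by rw [hpa]; ring
  have hpow2 : ((p : ℤ) + 1) = 2 * 2 ^ (a - 1) := by
    rw [hpow, ← pow_succ']
    congr 1; omega
  have hχ' : χ = -(2 ^ (a - 1) * m) := by
    rw [hχ, hpow2]
    have : -(2 * 2 ^ (a - 1) * m) = 2 * -(2 ^ (a - 1) * m) := by ring
    rw [this, Int.mul_ediv_cancel_left _ two_ne_zero]
  -- p ≡ -1 mod 16
  have h16 : ∃ q : ℤ, (p : ℤ) = 16 * q - 1 := by
    have : (16 : ℤ) ∣ 2 ^ a := by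
      have : (2 : ℤ) ^ a = 16 * 2 ^ (a - 4) := by
        have : a = 4 + (a - 4) := by omega
        rw [this, pow_add]; norm_num
      exact ⟨2 ^ (a - 4), this⟩
    obtain ⟨q, hq⟩ := this
    exact ⟨q, by rw [hpa, hq]⟩
  obtain ⟨q, hq⟩ := h16
  have hm16 : m = 16 * (16 * q ^ 2 - 7 * q) + 8 := by rw [hm, hq]; ring
  have hp15 : (15 : ℤ) ≤ p := by
    have h2a : (2 : ℤ) ^ 4 ≤ 2 ^ a := pow_le_pow_right₀ (by norm_num) ha4
    rw [hpa]; norm_num at h2a ⊢; linarith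
  have hm8 : 8 < m := by rw [hm]; nlinarith
  obtain ⟨c, hc⟩ := h
  have hpowpos : (0 : ℤ) < 2 ^ (a - 1) := by positivity
  have hχneg : χ < 0 := by rw [hχ']; nlinarith
  have hc' : 2 ^ (a - 1) * m = 2 ^ c := by
    rcases hc with hc | hc
    · exfalso; have : (0 : ℤ) < 2 ^ c := by positivity
      omega
    · have := hχ'.symm.trans hc
      linarith
  have hmdvd : m ∣ (2 : ℤ) ^ c := Dvd.intro_left _ hc'
  have hndvd : m.natAbs ∣ 2 ^ c := by
    have h2 := Int.natAbs_dvd_natAbs.mpr hmdvd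
    rwa [show ((2:ℤ)^c).natAbs = 2^c from by rw [Int.natAbs_pow]; rfl] at h2
  obtain ⟨k, hk, hkeq⟩ := (Nat.dvd_prime_pow Nat.prime_two).mp hndvd
  have hmabs : (m.natAbs : ℤ) = m := Int.natAbs_of_nonneg (by linarith)
  have hmk : m = 2 ^ k := by rw [← hmabs, hkeq]; push_cast; ring
  have hk4 : 4 ≤ k := by
    by_contra hlt
    have : (2 : ℤ) ^ k ≤ 2 ^ 3 := pow_le_pow_right₀ (by norm_num) (by omega)
    norm_num at this; omega
  have h16dvd : (16 : ℤ) ∣ m := by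
    rw [hmk]
    have : (2 : ℤ) ^ k = 16 * 2 ^ (k - 4) := by
      have : k = 4 + (k - 4) := by omega
      rw [this, pow_add]; norm_num
    exact ⟨2 ^ (k - 4), this⟩
  omega
end

section
/- If p is an odd prime, a ≥ 2, p = 2^a + 1, and (p-1)(p²-5p-2)/4 is a power of 2 in absolute value, then p²-5p-2 ∈ {-2, 2}; in fact p²-5p-2 = 2 has no integer solution, so p²-5p-2 = -2 and p = 5. -/
theorem stmt_19 (a p : ℕ) (ha : 2 ≤ a) (hp : p.Prime) (hodd : Odd p)
    (hpa : p = 2 ^ a + 1)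
    (h : ∃ c : ℕ, (((p : ℤ) - 1) * ((p : ℤ) ^ 2 - 5 * p - 2)) / 4 = 2 ^ c ∨
        (((p : ℤ) - 1) * ((p : ℤ) ^ 2 - 5 * p - 2)) / 4 = -(2 ^ c)) :
    p = 5 ∧ (p : ℤ) ^ 2 - 5 * p - 2 = -2 := by
  obtain ⟨b, rfl⟩ : ∃ b, a = b + 2 := ⟨a - 2, by omega⟩
  subst hpa
  obtain ⟨c, hc⟩ := h
  set s : ℤ := 2 ^ (b + 1) with hs
  set m : ℤ := 2 * s ^ 2 - 3 * s - 3 with hmdef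
  have hps : ((2 ^ (b + 2) + 1 : ℕ) : ℤ) = 2 * s + 1 := by
    push_cast [hs]; ring
  have hexp : (((2 ^ (b + 2) + 1 : ℕ) : ℤ) - 1) *
      (((2 ^ (b + 2) + 1 : ℕ) : ℤ) ^ 2 - 5 * ((2 ^ (b + 2) + 1 : ℕ) : ℤ) - 2) / 4
      = s * m := by
    rw [hps]
    have h4 : (2 * s + 1 - 1) * ((2 * s + 1) ^ 2 - 5 * (2 * s + 1) - 2)
        = 4 * (s * m) := by rw [hmdef]; ring
    rw [h4, Int.mul_ediv_cancel_left _ (by norm_num)]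
  rw [hexp] at hc
  -- m is odd
  have hseven : s = 2 * 2 ^ b := by rw [hs]; ring
  have hmodd : Odd m := ⟨4 * (2 ^ b) ^ 2 - 3 * 2 ^ b - 2, by rw [hmdef, hseven]; ring⟩
  -- m divides 2 ^ c
  have hdvd : m ∣ (2 : ℤ) ^ c := by
    rcases hc with hc | hc
    · exact ⟨s, by rw [← hc]; ring⟩
    · exact ⟨-s, by rw [← neg_eq_iff_eq_neg.mpr hc]; ring⟩
  have hdvdn : m.natAbs ∣ 2 ^ c := by
    have h1 := Int.natAbs_dvd_natAbs.mpr hdvd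
    rwa [Int.natAbs_pow, show (2 : ℤ).natAbs = 2 from rfl] at h1
  have hoddn : Odd m.natAbs := Int.natAbs_odd.mpr hmodd
  have hcop : Nat.Coprime m.natAbs 2 := by
    refine (Nat.prime_two.coprime_iff_not_dvd.mpr ?_).symm
    rw [Nat.odd_iff] at hoddn
    omega
  have hm1 : m.natAbs = 1 := (hcop.pow_right c).eq_one_of_dvd hdvdn
  have habs : m = 1 ∨ m = -1 := by
    rcases Int.natAbs_eq m with h | h <;> omega
  -- s ≥ 2, and s ≥ 3 would make m ≥ 6
  have hs2 : 2 ≤ s := by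
    rw [hs]
    calc (2 : ℤ) = 2 ^ 1 := by norm_num
    _ ≤ 2 ^ (b + 1) := pow_le_pow_right₀ (by norm_num) (by omega)
  have hseq : s = 2 := by
    by_contra hne
    have h3 : 3 ≤ s := by omega
    have : 6 ≤ m := by rw [hmdef]; nlinarith
    omega
  have hb0 : b = 0 := by
    have : (2 : ℤ) ^ (b + 1) = 2 ^ 1 := by rw [← hs, hseq]; norm_num
    have hnat : (2 : ℕ) ^ (b + 1) = 2 ^ 1 := by exact_mod_cast this
    have := Nat.pow_right_injective (le_refl 2) hnat
    omega
  subst hb0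
  norm_num
end
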